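/- arXiv:2206.14418 — 7 statements merged into one kernel-verified Lean document; each statement's English description precedes it below -/
import Mathlib

section
/- Let σ : ℝ → ℝ be monotone and L-Lipschitz for some L > 0, i.e. 0 ≤ (σ(a) − σ(c))/(a − c) ≤ L for all reals a ≠ c, and let σ̃(a) = ∫₀ᵃ σ(t) dt. Define Φ : ℝⁿ → ℝ by Φ(z) = (1/2)‖z‖² + Σ_{i=1}^m σ̃((A(z + b))_i). Then Φ is convex, and for every z ∈ ℝⁿ, z is a global minimizer of Φ (i.e. Φ(z) ≤ Φ(u) for all u ∈ ℝⁿ) if and only if z = f(z). -/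
/-!
Write `ℓ z = A (z + b)`. Splitting `∫₀^{ℓᵢ u} σ` at `ℓᵢ z` gives the exact expansion
`Φ u = Φ z + ⟪z - f z, u - z⟫ + ½‖u - z‖² + ∑ᵢ ∫_{ℓᵢ z}^{ℓᵢ u} (σ t - σ (ℓᵢ z)) dt`.
Monotonicity of `σ` makes every remainder integral nonnegative, so `z - f z` is a subgradient of
`Φ` at `z`: this gives convexity, and shows that fixed points of `f` are minimizers. The
Lipschitz bound makes the remainder `O(‖u - z‖²)`; at a minimizer, comparing `Φ z` with
`Φ (z - t (z - f z))` for small `t > 0` then forces `z - f z = 0`.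
-/

open Matrix
open Filter Topology
open scoped RealInnerProductSpace

section Scalar

variable {σ : ℝ → ℝ}

theorem monotone_of_forall_div_sub_nonneg (h : ∀ a c : ℝ, a ≠ c → 0 ≤ (σ a - σ c) / (a - c)) :
    Monotone σ := by
  intro a c hac
  rcases eq_or_ne a c with rfl | hne
  · rfl
  · exact (slope_nonneg_iff_of_le hac).1 (by simpa [slope_def_field] using h c a hne.symm)

theorem lipschitzWith_of_forall_abs_div_sub_le {K : NNReal}
    (h : ∀ a c : ℝ, a ≠ c → |(σ a - σ c) / (a - c)| ≤ K) : LipschitzWith K σ := by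
  refine LipschitzWith.of_dist_le_mul fun a c => ?_
  rcases eq_or_ne a c with rfl | hne
  · simp
  · rw [Real.dist_eq, Real.dist_eq, ← div_le_iff₀ (abs_pos.2 (sub_ne_zero.2 hne)), ← abs_div]
    exact h a c hne

theorem integral_eq_integral_add_mul_add_integral_sub (hσ : Continuous σ) (p a c : ℝ) :
    ∫ t in p..c, σ t = (∫ t in p..a, σ t) + σ a * (c - a) + ∫ t in a..c, (σ t - σ a) := by
  rw [intervalIntegral.integral_sub (hσ.intervalIntegrable _ _) intervalIntegrable_const,
    intervalIntegral.integral_const, smul_eq_mul,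
    ← intervalIntegral.integral_add_adjacent_intervals (hσ.intervalIntegrable p a)
      (hσ.intervalIntegrable a c)]
  ring

theorem integral_sub_nonneg_of_monotone (hσ : Monotone σ) (a c : ℝ) :
    0 ≤ ∫ t in a..c, (σ t - σ a) := by
  rcases le_total a c with hac | hca
  · exact intervalIntegral.integral_nonneg hac fun t ht => sub_nonneg.2 (hσ ht.1)
  · rw [intervalIntegral.integral_symm, ← intervalIntegral.integral_neg]
    exact intervalIntegral.integral_nonneg hca fun t ht => by simpa using hσ ht.2

theorem integral_sub_le_of_lipschitzWith {K : NNReal} (hσ : LipschitzWith K σ) (a c : ℝ) :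
    ∫ t in a..c, (σ t - σ a) ≤ K * (c - a) ^ 2 := by
  have hbound : ∀ t ∈ Set.uIoc a c, ‖σ t - σ a‖ ≤ K * |c - a| := fun t ht => by
    calc ‖σ t - σ a‖ ≤ K * |t - a| := by
          simpa [Real.dist_eq] using hσ.dist_le_mul t a
      _ ≤ K * |c - a| :=
          mul_le_mul_of_nonneg_left (Set.abs_sub_left_of_mem_uIcc (Set.uIoc_subset_uIcc ht))
            K.coe_nonneg
  calc ∫ t in a..c, (σ t - σ a) ≤ ‖∫ t in a..c, (σ t - σ a)‖ := Real.le_norm_self _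
    _ ≤ K * |c - a| * |c - a| := intervalIntegral.norm_integral_le_of_norm_le_const hbound
    _ = K * (c - a) ^ 2 := by rw [mul_assoc, ← sq, sq_abs]

end Scalar

section InnerProductSpace

variable {E : Type*} [NormedAddCommGroup E] [InnerProductSpace ℝ E] {φ : E → ℝ}

theorem convexOn_univ_of_forall_add_inner_le (g : E → E)
    (h : ∀ x y, φ x + ⟪g x, y - x⟫ ≤ φ y) : ConvexOn ℝ Set.univ φ := by
  refine ⟨convex_univ, fun x _ y _ a c ha hc hac => ?_⟩
  set w := a • x + c • y
  have hbalance : a * ⟪g w, x - w⟫ + c * ⟪g w, y - w⟫ = 0 := by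
    rw [← inner_smul_right, ← inner_smul_right, ← inner_add_right]
    convert inner_zero_right (g w) using 2
    linear_combination (norm := module) (-hac) • w
  have hx := mul_le_mul_of_nonneg_left (h w x) ha
  have hy := mul_le_mul_of_nonneg_left (h w y) hc
  simp only [smul_eq_mul]
  linear_combination hx + hy - φ w * hac - hbalance

theorem eq_zero_of_forall_le_of_le_add_inner_add_sq {z g : E} {C : ℝ} (hmin : ∀ u, φ z ≤ φ u)
    (hup : ∀ u, φ u ≤ φ z + ⟪g, u - z⟫ + C * ‖u - z‖ ^ 2) : g = 0 := by
  have hstep : ∀ t > 0, ‖g‖ ^ 2 ≤ t * (C * ‖g‖ ^ 2) := fun t ht => by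
    have := (hmin _).trans (hup (z - t • g))
    rw [sub_sub_cancel_left, ← neg_smul, inner_smul_right, real_inner_self_eq_norm_sq, norm_smul,
      Real.norm_eq_abs, abs_neg, abs_of_pos ht] at this
    nlinarith
  have hlim : Tendsto (fun t : ℝ => t * (C * ‖g‖ ^ 2)) (𝓝[>] 0) (𝓝 0) := by
    simpa using ((continuous_mul_const (C * ‖g‖ ^ 2)).tendsto 0).mono_left nhdsWithin_le_nhds
  have hg : ‖g‖ ^ 2 ≤ 0 := ge_of_tendsto hlim (eventually_nhdsWithin_of_forall hstep)
  exact norm_eq_zero.1 (pow_eq_zero_iff two_ne_zero |>.1 (le_antisymm hg (by positivity)))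

end InnerProductSpace

section Matrix

variable {ι κ : Type*} [Fintype κ]

theorem inner_toLp_transpose_mulVec [Fintype ι] (A : Matrix ι κ ℝ) (s : ι → ℝ)
    (v : EuclideanSpace ℝ κ) :
    ⟪WithLp.toLp 2 (Aᵀ *ᵥ s), v⟫ = s ⬝ᵥ (A *ᵥ v.ofLp) := by
  rw [EuclideanSpace.inner_eq_star_dotProduct, star_trivial, dotProduct_comm, mulVec_transpose,
    dotProduct_mulVec]

theorem sq_mulVec_apply_le (A : Matrix ι κ ℝ) (v : EuclideanSpace ℝ κ) (i : ι) :
    (A *ᵥ v.ofLp) i ^ 2 ≤ (∑ j, A i j ^ 2) * ‖v‖ ^ 2 := by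
  rw [EuclideanSpace.real_norm_sq_eq]
  exact Finset.sum_mul_sq_le_sq_mul_sq _ _ _

end Matrix

section Potential

variable {m n : ℕ} (A : Matrix (Fin m) (Fin n) ℝ) (b : EuclideanSpace ℝ (Fin n)) (σ : ℝ → ℝ)

noncomputable def potential (z : EuclideanSpace ℝ (Fin n)) : ℝ :=
  1 / 2 * ‖z‖ ^ 2 + ∑ i, ∫ t in (0 : ℝ)..(A *ᵥ (z + b)) i, σ t

noncomputable def potentialGrad (z : EuclideanSpace ℝ (Fin n)) : EuclideanSpace ℝ (Fin n) :=
  z + WithLp.toLp 2 (Aᵀ *ᵥ fun i => σ ((A *ᵥ (z + b)) i))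

theorem potential_eq_add_inner_add_sq_add_integral (hσ : Continuous σ)
    (z u : EuclideanSpace ℝ (Fin n)) :
    potential A b σ u = potential A b σ z + ⟪potentialGrad A b σ z, u - z⟫ + 1/2 * ‖u - z‖ ^ 2
      + ∑ i, ∫ t in (A *ᵥ (z + b)) i..(A *ᵥ (u + b)) i, (σ t - σ ((A *ᵥ (z + b)) i)) := by
  have hnorm : ‖u‖ ^ 2 = ‖z‖ ^ 2 + 2 * ⟪z, u - z⟫ + ‖u - z‖ ^ 2 := by
    simpa using norm_add_sq_real z (u - z)
  have hlinear : ⟪WithLp.toLp 2 (Aᵀ *ᵥ fun i => σ ((A *ᵥ (z + b)) i)), u - z⟫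
      = ∑ i, σ ((A *ᵥ (z + b)) i) * ((A *ᵥ (u + b)) i - (A *ᵥ (z + b)) i) := by
    rw [inner_toLp_transpose_mulVec, dotProduct]
    simp [mulVec_add, mulVec_sub]
  have hsplit := fun i => integral_eq_integral_add_mul_add_integral_sub hσ 0 ((A *ᵥ (z + b)) i)
    ((A *ᵥ (u + b)) i)
  rw [potential, potential, potentialGrad, inner_add_left, hlinear, hnorm,
    Finset.sum_congr rfl fun i _ => hsplit i, Finset.sum_add_distrib, Finset.sum_add_distrib]
  ring

theorem potential_add_inner_le (hmono : Monotone σ) (hσ : Continuous σ)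
    (z u : EuclideanSpace ℝ (Fin n)) :
    potential A b σ z + ⟪potentialGrad A b σ z, u - z⟫ ≤ potential A b σ u := by
  rw [potential_eq_add_inner_add_sq_add_integral A b σ hσ z u]
  have := Finset.sum_nonneg fun i (_ : i ∈ Finset.univ) =>
    integral_sub_nonneg_of_monotone hmono ((A *ᵥ (z + b)) i) ((A *ᵥ (u + b)) i)
  linarith [sq_nonneg ‖u - z‖]

theorem potential_le_add_inner_add_sq {K : NNReal} (hσ : LipschitzWith K σ)
    (z u : EuclideanSpace ℝ (Fin n)) :
    potential A b σ u ≤ potential A b σ z + ⟪potentialGrad A b σ z, u - z⟫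
      + (1/2 + K * ∑ i, ∑ j, A i j ^ 2) * ‖u - z‖ ^ 2 := by
  have hremainder : ∀ i, ∫ t in (A *ᵥ (z + b)) i..(A *ᵥ (u + b)) i, (σ t - σ ((A *ᵥ (z + b)) i))
      ≤ K * ((∑ j, A i j ^ 2) * ‖u - z‖ ^ 2) := fun i => by
    have hdiff : (A *ᵥ (u + b)) i - (A *ᵥ (z + b)) i = (A *ᵥ (u - z).ofLp) i := by
      simp only [WithLp.ofLp_sub, mulVec_add, mulVec_sub, Pi.add_apply, Pi.sub_apply]
      ring
    calc _ ≤ K * ((A *ᵥ (u + b)) i - (A *ᵥ (z + b)) i) ^ 2 :=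
          integral_sub_le_of_lipschitzWith hσ _ _
      _ ≤ _ := by
          rw [hdiff]
          exact mul_le_mul_of_nonneg_left (sq_mulVec_apply_le A (u - z) i) K.coe_nonneg
  have := Finset.sum_le_sum fun i (_ : i ∈ Finset.univ) => hremainder i
  rw [← Finset.mul_sum, ← Finset.sum_mul] at this
  rw [potential_eq_add_inner_add_sq_add_integral A b σ hσ.continuous z u]
  linear_combination this

end Potential

theorem stmt0_general {m n : ℕ} (A : Matrix (Fin m) (Fin n) ℝ) (b : EuclideanSpace ℝ (Fin n))
    (σ : ℝ → ℝ) (L : ℝ)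
    (hσ : ∀ a c : ℝ, a ≠ c →
      0 ≤ (σ a - σ c) / (a - c) ∧ (σ a - σ c) / (a - c) ≤ L)
    (f : EuclideanSpace ℝ (Fin n) → EuclideanSpace ℝ (Fin n))
    (hf : ∀ z, f z = -(Aᵀ.mulVec (fun i => σ (A.mulVec (z + b) i))))
    (Φ : EuclideanSpace ℝ (Fin n) → ℝ)
    (hΦ : ∀ z, Φ z = (1/2) * ‖z‖^2 + ∑ i, ∫ t in (0:ℝ)..(A.mulVec (z + b) i), σ t) :
    ConvexOn ℝ Set.univ Φ ∧ ∀ z, (∀ u, Φ z ≤ Φ u) ↔ z = f z := by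
  have hmono : Monotone σ := monotone_of_forall_div_sub_nonneg fun a c h => (hσ a c h).1
  have hlip : LipschitzWith L.toNNReal σ := lipschitzWith_of_forall_abs_div_sub_le fun a c h => by
    rw [abs_of_nonneg (hσ a c h).1]
    exact (hσ a c h).2.trans (Real.le_coe_toNNReal L)
  obtain rfl : Φ = potential A b σ := funext hΦ
  have hgrad : ∀ z, z - f z = potentialGrad A b σ z := fun z => by
    ext j
    simp [potentialGrad, hf]
  refine ⟨convexOn_univ_of_forall_add_inner_le _
    (potential_add_inner_le A b σ hmono hlip.continuous), fun z => ⟨fun hmin => ?_, fun hz u => ?_⟩⟩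
  · rw [← sub_eq_zero, hgrad]
    exact eq_zero_of_forall_le_of_le_add_inner_add_sq hmin
      (potential_le_add_inner_add_sq A b σ hlip z)
  · simpa [← hgrad, ← hz] using potential_add_inner_le A b σ hmono hlip.continuous z u

/-- For `σ` monotone and `L`-Lipschitz (in the difference-quotient sense),
`σ̃ a = ∫ t in 0..a, σ t`, and `Φ z = (1/2)‖z‖² + ∑ i, σ̃ ((A (z + b)) i)`, the function `Φ`
is convex, and `z` is a global minimizer of `Φ` iff `z = f z`, where
`f z = −Aᵀ σ (A (z + b))` componentwise. -/
theorem stmt0 {m n : ℕ} (A : Matrix (Fin m) (Fin n) ℝ) (b : EuclideanSpace ℝ (Fin n))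
    (σ : ℝ → ℝ) (L : ℝ) (hL : 0 < L)
    (hσ : ∀ a c : ℝ, a ≠ c →
      0 ≤ (σ a - σ c) / (a - c) ∧ (σ a - σ c) / (a - c) ≤ L)
    (f : EuclideanSpace ℝ (Fin n) → EuclideanSpace ℝ (Fin n))
    (hf : ∀ z, f z = -(Aᵀ.mulVec (fun i => σ (A.mulVec (z + b) i))))
    (Φ : EuclideanSpace ℝ (Fin n) → ℝ)
    (hΦ : ∀ z, Φ z = (1/2) * ‖z‖^2 + ∑ i, ∫ t in (0:ℝ)..(A.mulVec (z + b) i), σ t) :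
    ConvexOn ℝ Set.univ Φ ∧ ∀ z, (∀ u, Φ z ≤ Φ u) ↔ z = f z :=
  stmt0_general A b σ L hσ f hf Φ hΦ
end

section
/- Let K be a real h×h matrix, G a real m×n matrix, and K ⊗ G their Kronecker product. Let σ : ℝ → ℝ be monotone and 1-Lipschitz, i.e. 0 ≤ (σ(a) − σ(c))/(a − c) ≤ 1 for all reals a ≠ c, and let b̂ be a fixed vector of dimension h·n. Define f(z) = −(K ⊗ G)ᵀ σ((K ⊗ G)(z + b̂)), where σ is applied componentwise. If ‖K‖₂·‖G‖₂ < 1, then the equilibrium equation z = f(z) has exactly one solution z. -/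
/-!
With `A = K ⊗ G`, the right-hand side is the composite of `z ↦ z + b̂`, `A`, the componentwise
`σ` and `-Aᵀ`, which are Lipschitz for the Euclidean norm with constants `1`, `‖A‖₂`, `1`,
`‖A‖₂`. Since `‖K ⊗ G‖₂ ≤ ‖K‖₂ ‖G‖₂ < 1`, it is a contraction of Euclidean space, and Banach's
fixed point theorem gives exactly one equilibrium.
-/

open Matrix Kronecker

/-- The L2 operator norm of a real matrix. -/
noncomputable def l2OpNorm {α β : Type} [Fintype α] [Fintype β] [DecidableEq β]
    (A : Matrix α β ℝ) : ℝ :=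
  ‖LinearMap.toContinuousLinearMap (Matrix.toEuclideanLin A)‖

open scoped Matrix.Norms.L2Operator NNReal

namespace Matrix

theorem l2OpNorm_eq_norm {α β : Type} [Fintype α] [Fintype β] [DecidableEq β]
    (A : Matrix α β ℝ) : l2OpNorm A = ‖A‖ := rfl

variable {𝕜 : Type*} [RCLike 𝕜] {l m n p : Type*}

theorem kronecker_mulVec_apply {R : Type*} [CommSemiring R] [Fintype m] [Fintype p]
    (A : Matrix l m R) (B : Matrix n p R) (v : m × p → R) (i : l) (j : n) :
    (A ⊗ₖ B *ᵥ v) (i, j) = ∑ k, A i k * (B *ᵥ fun q => v (k, q)) j := by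
  simp only [mulVec, dotProduct, Fintype.sum_prod_type, kroneckerMap_apply, Finset.mul_sum]
  exact Finset.sum_congr rfl fun k _ => Finset.sum_congr rfl fun q _ => by ring

section

variable [Fintype m] [Fintype n] [DecidableEq n]

theorem sum_norm_sq_mulVec_le (A : Matrix m n 𝕜) (x : n → 𝕜) :
    ∑ i, ‖(A *ᵥ x) i‖ ^ 2 ≤ ‖A‖ ^ 2 * ∑ j, ‖x j‖ ^ 2 := by
  have h := pow_le_pow_left₀ (norm_nonneg _) (A.l2_opNorm_mulVec (WithLp.toLp 2 x)) 2
  rwa [mul_pow, EuclideanSpace.norm_sq_eq, EuclideanSpace.norm_sq_eq] at h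

theorem lipschitzWith_toLp_mulVec (A : Matrix m n 𝕜) :
    LipschitzWith ‖A‖₊ fun x : EuclideanSpace 𝕜 n => WithLp.toLp 2 (A *ᵥ x) :=
  (LinearMap.toContinuousLinearMap (toEuclideanLin A)).lipschitz

theorem l2_opNNNorm_transpose [DecidableEq m] (A : Matrix m n ℝ) : ‖Aᵀ‖₊ = ‖A‖₊ := by
  simpa only [conjTranspose_eq_transpose_of_trivial] using A.l2_opNNNorm_conjTranspose

end

variable [Fintype l] [Fintype m] [Fintype n] [Fintype p] [DecidableEq m] [DecidableEq p]

/-- Viewing `v` as an `m × p` array `V`, `(A ⊗ B) v` is `A V Bᵀ`: apply `B` to the rows of `V`,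
then `A` to the columns of the result. -/
theorem sum_norm_sq_kronecker_mulVec_le (A : Matrix l m 𝕜) (B : Matrix n p 𝕜) (v : m × p → 𝕜) :
    ∑ ij, ‖(A ⊗ₖ B *ᵥ v) ij‖ ^ 2 ≤ (‖A‖ * ‖B‖) ^ 2 * ∑ kq, ‖v kq‖ ^ 2 := by
  set W : m → n → 𝕜 := fun k => B *ᵥ fun q => v (k, q)
  calc ∑ ij, ‖(A ⊗ₖ B *ᵥ v) ij‖ ^ 2
      = ∑ j, ∑ i, ‖(A *ᵥ fun k => W k j) i‖ ^ 2 := by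
        rw [Fintype.sum_prod_type, Finset.sum_comm]
        simp only [kronecker_mulVec_apply]
        rfl
    _ ≤ ∑ j, ‖A‖ ^ 2 * ∑ k, ‖W k j‖ ^ 2 :=
        Finset.sum_le_sum fun j _ => A.sum_norm_sq_mulVec_le _
    _ = ‖A‖ ^ 2 * ∑ k, ∑ j, ‖W k j‖ ^ 2 := by rw [← Finset.mul_sum, Finset.sum_comm]
    _ ≤ ‖A‖ ^ 2 * ∑ k, ‖B‖ ^ 2 * ∑ q, ‖v (k, q)‖ ^ 2 := by
        gcongr with k
        exact B.sum_norm_sq_mulVec_le _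
    _ = (‖A‖ * ‖B‖) ^ 2 * ∑ kq, ‖v kq‖ ^ 2 := by
        rw [Fintype.sum_prod_type, mul_pow, ← Finset.mul_sum, mul_assoc]

theorem l2_opNorm_kronecker_le (A : Matrix l m 𝕜) (B : Matrix n p 𝕜) :
    ‖A ⊗ₖ B‖ ≤ ‖A‖ * ‖B‖ := by
  refine ContinuousLinearMap.opNorm_le_bound _ (by positivity) fun v => ?_
  refine le_of_pow_le_pow_left₀ two_ne_zero (by positivity) ?_
  rw [mul_pow, EuclideanSpace.norm_sq_eq, EuclideanSpace.norm_sq_eq]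
  exact sum_norm_sq_kronecker_mulVec_le A B v.ofLp

end Matrix

theorem lipschitzWith_of_abs_slope_le {σ : ℝ → ℝ} {K : ℝ≥0}
    (h : ∀ a c, a ≠ c → |(σ a - σ c) / (a - c)| ≤ K) : LipschitzWith K σ := by
  refine LipschitzWith.of_dist_le_mul fun a c => ?_
  rcases eq_or_ne a c with rfl | hac
  · simp
  rw [Real.dist_eq, Real.dist_eq, ← div_le_iff₀ (abs_pos.2 (sub_ne_zero.2 hac)), ← abs_div]
  exact h a c hac

theorem LipschitzWith.euclideanSpace_map {𝕜 : Type*} [RCLike 𝕜] {ι : Type*} [Fintype ι]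
    {σ : 𝕜 → 𝕜} {K : ℝ≥0} (hσ : LipschitzWith K σ) :
    LipschitzWith K fun x : EuclideanSpace 𝕜 ι => WithLp.toLp 2 fun i => σ (x i) := by
  refine LipschitzWith.of_dist_le_mul fun x y => ?_
  rw [EuclideanSpace.dist_eq, EuclideanSpace.dist_eq, ← Real.sqrt_sq K.coe_nonneg,
    ← Real.sqrt_mul (sq_nonneg _), Finset.mul_sum]
  gcongr with i
  rw [← mul_pow]
  exact pow_le_pow_left₀ dist_nonneg (hσ.dist_le_mul _ _) 2

theorem lipschitzWith_neg_transpose_mulVec_comp_mulVec {ι κ : Type*} [Fintype ι] [Fintype κ]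
    [DecidableEq ι] [DecidableEq κ] (A : Matrix κ ι ℝ) {σ : ℝ → ℝ} {K : ℝ≥0}
    (hσ : LipschitzWith K σ) (b : EuclideanSpace ℝ ι) :
    LipschitzWith (‖A‖₊ * K * ‖A‖₊) fun z : EuclideanSpace ℝ ι =>
      -WithLp.toLp 2 (Aᵀ *ᵥ fun i => σ ((A *ᵥ (z + b).ofLp) i)) := by
  have := ((Aᵀ.lipschitzWith_toLp_mulVec.comp hσ.euclideanSpace_map).comp
    A.lipschitzWith_toLp_mulVec).comp (isometry_add_right b).lipschitz
  rw [A.l2_opNNNorm_transpose, mul_one] at this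
  exact this.neg

/-- For `K : h×h`, `G : m×n`, `σ` monotone and 1-Lipschitz, and a fixed vector
`b̂` of dimension `h·n`, if `‖K‖₂ ⬝ ‖G‖₂ < 1`, then the equilibrium equation
`z = −(K ⊗ G)ᵀ σ ((K ⊗ G)(z + b̂))` has exactly one solution. -/
theorem stmt4 {h m n : ℕ} (K : Matrix (Fin h) (Fin h) ℝ) (G : Matrix (Fin m) (Fin n) ℝ)
    (σ : ℝ → ℝ)
    (hσ : ∀ a c : ℝ, a ≠ c →
      0 ≤ (σ a - σ c) / (a - c) ∧ (σ a - σ c) / (a - c) ≤ 1)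
    (bhat : Fin h × Fin n → ℝ)
    (f : (Fin h × Fin n → ℝ) → (Fin h × Fin n → ℝ))
    (hf : ∀ z, f z = -((K ⊗ₖ G)ᵀ.mulVec (fun i => σ ((K ⊗ₖ G).mulVec (z + bhat) i))))
    (hKG : l2OpNorm K * l2OpNorm G < 1) :
    ∃! z : Fin h × Fin n → ℝ, z = f z := by
  set A := K ⊗ₖ G
  have hσ_lip : LipschitzWith 1 σ := lipschitzWith_of_abs_slope_le fun a c hac => by
    obtain ⟨h0, h1⟩ := hσ a c hac
    rw [NNReal.coe_one, abs_le]
    constructor <;> linarith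
  have hA : ‖A‖ < 1 := by
    rw [l2OpNorm_eq_norm, l2OpNorm_eq_norm] at hKG
    exact (l2_opNorm_kronecker_le K G).trans_lt hKG
  let g (z : EuclideanSpace ℝ (Fin h × Fin n)) := WithLp.toLp 2 (f z.ofLp)
  have hg : ContractingWith (‖A‖₊ * 1 * ‖A‖₊) g := by
    refine ⟨?_, ?_⟩
    · rw [mul_one, ← NNReal.coe_lt_coe, NNReal.coe_mul, coe_nnnorm, NNReal.coe_one]
      nlinarith [norm_nonneg A]
    · have hg_eq : g = fun z =>
          -WithLp.toLp 2 (Aᵀ *ᵥ fun i => σ ((A *ᵥ (z + WithLp.toLp 2 bhat).ofLp) i)) :=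
        funext fun z => congrArg (WithLp.toLp 2) (hf z.ofLp)
      rw [hg_eq]
      exact lipschitzWith_neg_transpose_mulVec_comp_mulVec A hσ_lip _
  refine ((WithLp.equiv 2 _).existsUnique_congr_left (p := fun z => z.ofLp = f z.ofLp)).mp
    ⟨hg.fixedPoint g, congrArg WithLp.ofLp (hg.fixedPoint_isFixedPt).symm, fun z hz => ?_⟩
  exact hg.fixedPoint_unique (congrArg (WithLp.toLp 2) hz.symm)
end

section
/- Let σ : ℝ → ℝ be monotone and 1-Lipschitz, i.e. 0 ≤ (σ(a) − σ(c))/(a − c) ≤ 1 for all reals a ≠ c, assume ‖A‖₂ ≤ 1, and let σ̃(a) = ∫₀ᵃ σ(t) dt. Define ψ : ℝⁿ → ℝ by ψ(z) = (1/4)‖z‖² − (1/2)·Σ_{i=1}^m σ̃((A(z + b))_i). Then ψ is convex, and at every z ∈ ℝⁿ its gradient (with respect to the Euclidean inner product) is ∇ψ(z) = (1/2)(z + f(z)) = (1/2)(z − Aᵀσ(A(z + b))). -/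
open Matrix

/-!
By the fundamental theorem of calculus, `y ↦ ∑ i, ∫₀^{yᵢ} σ` has gradient `σ(y)`, and the chain
rule through the affine map `z ↦ A (z + b)` turns it into `Aᵀ σ (A (z + b))`. A differentiable
function whose gradient is a monotone operator is convex, since along every line its derivative
is monotone. Here monotonicity of `∇ψ` reduces to
`⟪σ(A (u + b)) - σ(A (w + b)), A (u - w)⟫ ≤ ‖A (u - w)‖² ≤ ‖u - w‖²`, where the first inequality
holds because the slopes of `σ` are at most `1` and the second because `‖A‖₂ ≤ 1`.
-/

open Set AffineMap
open scoped RealInnerProductSpace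

theorem exists_mem_Icc_sub_eq_mul {σ : ℝ → ℝ}
    (hσ : ∀ a c : ℝ, a ≠ c → 0 ≤ (σ a - σ c) / (a - c) ∧ (σ a - σ c) / (a - c) ≤ 1)
    (a c : ℝ) : ∃ s ∈ Icc (0 : ℝ) 1, σ a - σ c = s * (a - c) := by
  rcases eq_or_ne a c with rfl | hac
  · exact ⟨0, by simp⟩
  · exact ⟨_, hσ a c hac, (div_mul_cancel₀ _ (sub_ne_zero.2 hac)).symm⟩

theorem lipschitzWith_one_of_slope_mem_Icc {σ : ℝ → ℝ}
    (hσ : ∀ a c : ℝ, a ≠ c → 0 ≤ (σ a - σ c) / (a - c) ∧ (σ a - σ c) / (a - c) ≤ 1) :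
    LipschitzWith 1 σ := by
  refine LipschitzWith.of_dist_le_mul fun a c => ?_
  obtain ⟨s, ⟨hs₀, hs₁⟩, hs⟩ := exists_mem_Icc_sub_eq_mul hσ a c
  rw [Real.dist_eq, Real.dist_eq, hs, abs_mul, abs_of_nonneg hs₀, NNReal.coe_one]
  exact mul_le_mul_of_nonneg_right hs₁ (abs_nonneg _)

theorem sub_mul_sub_le_sq_of_slope_mem_Icc {σ : ℝ → ℝ}
    (hσ : ∀ a c : ℝ, a ≠ c → 0 ≤ (σ a - σ c) / (a - c) ∧ (σ a - σ c) / (a - c) ≤ 1)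
    (a c : ℝ) : (σ a - σ c) * (a - c) ≤ (a - c) ^ 2 := by
  obtain ⟨s, ⟨-, hs₁⟩, hs⟩ := exists_mem_Icc_sub_eq_mul hσ a c
  rw [hs, mul_assoc, ← sq]
  exact mul_le_of_le_one_left (sq_nonneg _) hs₁

section Gradient

variable {E F : Type*} [NormedAddCommGroup E] [InnerProductSpace ℝ E] [CompleteSpace E]
  [NormedAddCommGroup F] [InnerProductSpace ℝ F] [CompleteSpace F]

theorem HasGradientAt.sub {f g : E → ℝ} {f' g' x : E} (hf : HasGradientAt f f' x)
    (hg : HasGradientAt g g' x) : HasGradientAt (fun x => f x - g x) (f' - g') x := by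
  rw [hasGradientAt_iff_hasFDerivAt, map_sub]
  exact hf.hasFDerivAt.sub hg.hasFDerivAt

theorem HasGradientAt.const_mul {f : E → ℝ} {f' x : E} (c : ℝ) (hf : HasGradientAt f f' x) :
    HasGradientAt (fun x => c * f x) (c • f') x := by
  rw [hasGradientAt_iff_hasFDerivAt, map_smul]
  exact hf.hasFDerivAt.const_mul c

theorem hasGradientAt_norm_sq (x : E) : HasGradientAt (fun x => ‖x‖ ^ 2) ((2 : ℝ) • x) x := by
  rw [hasGradientAt_iff_hasFDerivAt]
  refine (hasStrictFDerivAt_norm_sq x).hasFDerivAt.congr_fderiv ?_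
  ext v
  simp

theorem HasGradientAt.comp_clm_add {φ : F → ℝ} {g : F} (L : E →L[ℝ] F) (b x : E)
    (h : HasGradientAt φ g (L (x + b))) :
    HasGradientAt (fun x => φ (L (x + b))) (L.adjoint g) x := by
  rw [hasGradientAt_iff_hasFDerivAt]
  have hL : HasFDerivAt (fun x => L (x + b)) L x :=
    L.hasFDerivAt.comp x ((hasFDerivAt_id x).add_const b)
  refine (h.hasFDerivAt.comp x hL).congr_fderiv ?_
  ext v
  simp [ContinuousLinearMap.adjoint_inner_left]

theorem convexOn_univ_of_hasGradientAt_of_monotone {f : E → ℝ} {f' : E → E}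
    (hf : ∀ x, HasGradientAt f (f' x) x) (hmono : ∀ x y, 0 ≤ ⟪f' x - f' y, x - y⟫) :
    ConvexOn ℝ univ f := by
  refine ⟨convex_univ, fun x _ y _ a c ha hc hac => ?_⟩
  let g (t : ℝ) := f (lineMap x y t)
  have hg (t : ℝ) : HasDerivAt g ⟪f' (lineMap x y t), y - x⟫ t :=
    (hf _).hasFDerivAt.comp_hasDerivAt t hasDerivAt_lineMap
  have hg_mono : Monotone (deriv g) := by
    intro s t hst
    rw [(hg s).deriv, (hg t).deriv, ← sub_nonneg, ← inner_sub_left]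
    rcases hst.eq_or_lt with rfl | hst
    · simp
    have key := hmono (lineMap x y t) (lineMap x y s)
    rw [lineMap_apply_module', lineMap_apply_module', add_sub_add_right_eq_sub, ← sub_smul,
      real_inner_smul_right] at key
    exact nonneg_of_mul_nonneg_right key (sub_pos.2 hst)
  have := (hg_mono.convexOn_univ_of_deriv fun t => (hg t).differentiableAt).2
    (mem_univ 0) (mem_univ 1) ha hc hac
  obtain rfl : a = 1 - c := eq_sub_of_add_eq hac
  simpa [g, lineMap_apply_module] using this

end Gradient

section Euclidean

variable {ι : Type*} [Fintype ι] {σ : ℝ → ℝ}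

theorem hasGradientAt_sum_intervalIntegral (hσ : Continuous σ) (y : EuclideanSpace ℝ ι) :
    HasGradientAt (fun y : EuclideanSpace ℝ ι => ∑ i, ∫ t in (0 : ℝ)..y i, σ t)
      (WithLp.toLp 2 fun i => σ (y i)) y := by
  rw [hasGradientAt_iff_hasFDerivAt]
  have hterm (i : ι) : HasFDerivAt (fun y : EuclideanSpace ℝ ι => ∫ t in (0 : ℝ)..y i, σ t)
      (σ (y i) • EuclideanSpace.proj i) y :=
    (hσ.integral_hasStrictDerivAt 0 _).hasDerivAt.comp_hasFDerivAt y
      (EuclideanSpace.proj (𝕜 := ℝ) i).hasFDerivAt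
  refine (HasFDerivAt.fun_sum fun i _ => hterm i).congr_fderiv ?_
  ext v
  simp [PiLp.inner_apply, mul_comm]

theorem inner_map_sub_map_le_norm_sq (hσ : ∀ a c, (σ a - σ c) * (a - c) ≤ (a - c) ^ 2)
    (p q : EuclideanSpace ℝ ι) :
    ⟪(WithLp.toLp 2 fun i => σ (p i)) - WithLp.toLp 2 fun i => σ (q i), p - q⟫ ≤ ‖p - q‖ ^ 2 := by
  rw [← real_inner_self_eq_norm_sq]
  simp only [PiLp.inner_apply, PiLp.sub_apply, RCLike.inner_apply, conj_trivial]
  exact Finset.sum_le_sum fun i _ => by rw [← sq, mul_comm]; exact hσ _ _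

theorem inner_adjoint_map_sub_le_norm_sq {E : Type*} [NormedAddCommGroup E]
    [InnerProductSpace ℝ E] [CompleteSpace E]
    (hσ : ∀ a c, (σ a - σ c) * (a - c) ≤ (a - c) ^ 2)
    (L : E →L[ℝ] EuclideanSpace ℝ ι) (hL : ‖L‖ ≤ 1) (u w : E) :
    ⟪L.adjoint (WithLp.toLp 2 fun i => σ (L u i)) - L.adjoint (WithLp.toLp 2 fun i => σ (L w i)),
      u - w⟫ ≤ ‖u - w‖ ^ 2 :=
  calc _ = ⟪(WithLp.toLp 2 fun i => σ (L u i)) - WithLp.toLp 2 fun i => σ (L w i),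
          L u - L w⟫ := by
        rw [← map_sub, ContinuousLinearMap.adjoint_inner_left, map_sub]
    _ ≤ ‖L (u - w)‖ ^ 2 := by rw [map_sub]; exact inner_map_sub_map_le_norm_sq hσ _ _
    _ ≤ ‖u - w‖ ^ 2 := by
        gcongr
        simpa using L.le_of_opNorm_le hL (u - w)

end Euclidean

theorem Matrix.adjoint_toContinuousLinearMap_toEuclideanLin_apply {m n : Type*}
    [Fintype m] [DecidableEq m] [Fintype n] [DecidableEq n]
    (A : Matrix m n ℝ) (v : EuclideanSpace ℝ m) :
    (LinearMap.toContinuousLinearMap (toEuclideanLin A)).adjoint v = WithLp.toLp 2 (Aᵀ *ᵥ v) := by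
  rw [← LinearMap.adjoint_toContinuousLinearMap, LinearMap.coe_toContinuousLinearMap',
    ← toEuclideanLin_conjTranspose_eq_adjoint, conjTranspose_eq_transpose_of_trivial]
  rfl

/-- For `σ` monotone and 1-Lipschitz, `‖A‖₂ ≤ 1`, and
`ψ z = (1/4)‖z‖² − (1/2) ∑ i, σ̃ ((A (z + b)) i)` with `σ̃ a = ∫ t in 0..a, σ t`, the function
`ψ` is convex with gradient `∇ψ(z) = (1/2)(z + f z)`, where `f z = −Aᵀ σ (A (z + b))`. -/
theorem stmt7 {m n : ℕ} (A : Matrix (Fin m) (Fin n) ℝ) (b : EuclideanSpace ℝ (Fin n))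
    (σ : ℝ → ℝ)
    (hσ : ∀ a c : ℝ, a ≠ c →
      0 ≤ (σ a - σ c) / (a - c) ∧ (σ a - σ c) / (a - c) ≤ 1)
    (hA : l2OpNorm A ≤ 1)
    (f : EuclideanSpace ℝ (Fin n) → EuclideanSpace ℝ (Fin n))
    (hf : ∀ z, f z = -(Aᵀ.mulVec (fun i => σ (A.mulVec (z + b) i))))
    (ψ : EuclideanSpace ℝ (Fin n) → ℝ)
    (hψ : ∀ z, ψ z = (1/4) * ‖z‖^2
      - (1/2) * ∑ i, ∫ t in (0:ℝ)..(A.mulVec (z + b) i), σ t) :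
    ConvexOn ℝ Set.univ ψ ∧
    ∀ z : EuclideanSpace ℝ (Fin n), HasGradientAt ψ ((1/2 : ℝ) • (z + f z)) z := by
  set L := LinearMap.toContinuousLinearMap (toEuclideanLin A)
  have hf' (z) : f z = -L.adjoint (WithLp.toLp 2 fun i => σ (L (z + b) i)) :=
    WithLp.ofLp_injective 2 <| by
      rw [hf z, Matrix.adjoint_toContinuousLinearMap_toEuclideanLin_apply]; rfl
  have hσ_cont := (lipschitzWith_one_of_slope_mem_Icc hσ).continuous
  have grad (z) : HasGradientAt ψ ((1/2 : ℝ) • (z + f z)) z := by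
    have hsum := (hasGradientAt_sum_intervalIntegral hσ_cont _).comp_clm_add L b z
    convert ((hasGradientAt_norm_sq z).const_mul (1/4)).sub (hsum.const_mul (1/2)) using 1
    · exact funext hψ
    · rw [hf']; module
  refine ⟨convexOn_univ_of_hasGradientAt_of_monotone grad fun u w => ?_, grad⟩
  have key := inner_adjoint_map_sub_le_norm_sq (sub_mul_sub_le_sq_of_slope_mem_Icc hσ) L hA
    (u + b) (w + b)
  rw [add_sub_add_right_eq_sub] at key
  rw [hf', hf', ← sub_eq_add_neg, ← sub_eq_add_neg, ← smul_sub, sub_sub_sub_comm,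
    real_inner_smul_left, inner_sub_left, real_inner_self_eq_norm_sq]
  linarith
end

section
/- Let E be the Euclidean space ℝⁿ, let φ : E → ℝ be convex, and let p : E → E be a map such that for every z ∈ E, p(z) is a minimizer of u ↦ (1/2)‖u − z‖² + φ(u), i.e. (1/2)‖p(z) − z‖² + φ(p(z)) ≤ (1/2)‖u − z‖² + φ(u) for all u ∈ E. Then: (a) p is nonexpansive, ‖p(z) − p(z′)‖ ≤ ‖z − z′‖ for all z, z′ ∈ E; and (b) there exists a convex function ψ : E → ℝ which is differentiable everywhere with gradient ∇ψ(z) = p(z) at every z ∈ E. -/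
open scoped RealInnerProductSpace
open Filter Asymptotics Set Topology

/-!
Writing the minimality of `p z` as `⟪z, u⟫ - ½‖u‖² - φ u ≤ ⟪z, p z⟫ - ½‖p z‖² - φ (p z)` exhibits
`ψ z := ⟪z, p z⟫ - ½‖p z‖² - φ (p z)` as the pointwise maximum of the affine functions
`z ↦ ⟪z, u⟫ - ½‖u‖² - φ u`, attained at `u = p z`. Hence `ψ` is convex and
`⟪y - z, p z⟫ ≤ ψ y - ψ z ≤ ⟪y - z, p y⟫`, so `p z` is the gradient of `ψ` at `z` as soon as `p` is
continuous. Continuity comes from convexity of `φ`: perturbing `p z` towards any `u` gives the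
variational inequality `φ (p z) ≤ φ u + ⟪p z - z, u - p z⟫`, and adding it at `z` and `z'` shows that
`p` is firmly nonexpansive.
-/

variable {E : Type*} [NormedAddCommGroup E] [InnerProductSpace ℝ E]

lemma nonneg_of_forall_mem_Ioo_nonneg_add_mul {c d : ℝ} (h : ∀ t ∈ Ioo (0 : ℝ) 1, 0 ≤ c + t * d) :
    0 ≤ c := by
  have hlim : Tendsto (fun t : ℝ => c + t * d) (𝓝[>] 0) (𝓝 c) := by
    have : Tendsto (fun t : ℝ => c + t * d) (𝓝 0) (𝓝 (c + 0 * d)) :=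
      (continuous_const.add (continuous_id.mul continuous_const)).tendsto 0
    simpa using this.mono_left nhdsWithin_le_nhds
  refine ge_of_tendsto hlim ?_
  filter_upwards [Ioo_mem_nhdsGT_of_mem (by norm_num : (0 : ℝ) ∈ Ico (0 : ℝ) 1)] with t ht
  exact h t ht

lemma norm_le_of_sq_norm_le_inner {a b : E} (h : ‖a‖ ^ 2 ≤ ⟪b, a⟫) : ‖a‖ ≤ ‖b‖ := by
  have hcs := real_inner_le_norm b a
  rcases (norm_nonneg a).eq_or_lt with ha | ha
  · rw [← ha]; exact norm_nonneg b
  · nlinarith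

lemma hasGradientAt_of_inner_le_sub_le_inner {ψ : E → ℝ} {p : E → E} {z : E} [CompleteSpace E]
    (hp : ContinuousAt p z) (hψ : ∀ y, ⟪y - z, p z⟫ ≤ ψ y - ψ z ∧ ψ y - ψ z ≤ ⟪y - z, p y⟫) :
    HasGradientAt ψ (p z) z := by
  have hbound : ∀ y, ‖ψ y - ψ z - ⟪p z, y - z⟫‖ ≤ ‖‖y - z‖ * ‖p y - p z‖‖ := fun y => by
    have hsplit : ⟪y - z, p y⟫ = ⟪y - z, p z⟫ + ⟪y - z, p y - p z⟫ := by
      rw [inner_sub_right]; ring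
    have hcs := real_inner_le_norm (y - z) (p y - p z)
    rw [real_inner_comm, Real.norm_eq_abs, Real.norm_eq_abs, abs_le,
      abs_of_nonneg (by positivity)]
    constructor <;> linarith [hψ y, mul_nonneg (norm_nonneg (y - z)) (norm_nonneg (p y - p z))]
  have hsmall : (fun y => p y - p z) =o[𝓝 z] (fun _ => (1 : ℝ)) :=
    (isLittleO_one_iff ℝ).2 (tendsto_sub_nhds_zero_iff.2 hp)
  have hprod : (fun y => ‖y - z‖ * ‖p y - p z‖) =o[𝓝 z] (fun y => ‖y - z‖ * 1) :=
    (isBigO_refl (fun y => ‖y - z‖) _).mul_isLittleO hsmall.norm_left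
  rw [hasGradientAt_iff_isLittleO]
  simpa using (isBigO_of_le _ hbound).trans_isLittleO hprod.norm_right

def IsProxMap (φ : E → ℝ) (p : E → E) : Prop :=
  ∀ z u : E, (1/2) * ‖p z - z‖ ^ 2 + φ (p z) ≤ (1/2) * ‖u - z‖ ^ 2 + φ u

noncomputable def proxPotential (φ : E → ℝ) (p : E → E) (z : E) : ℝ :=
  ⟪z, p z⟫ - (1/2) * ‖p z‖ ^ 2 - φ (p z)

namespace IsProxMap

variable {φ : E → ℝ} {p : E → E}

lemma inner_sub_le_proxPotential (hp : IsProxMap φ p) (z u : E) :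
    ⟪z, u⟫ - (1/2) * ‖u‖ ^ 2 - φ u ≤ proxPotential φ p z := by
  have h := hp z u
  rw [norm_sub_sq_real u z, norm_sub_sq_real (p z) z, real_inner_comm z u,
    real_inner_comm z (p z)] at h
  unfold proxPotential
  linarith

lemma convexOn_proxPotential (hp : IsProxMap φ p) : ConvexOn ℝ univ (proxPotential φ p) := by
  refine ⟨convex_univ, fun x _ y _ s t hs ht hst => ?_⟩
  set w := p (s • x + t • y)
  have hx := mul_le_mul_of_nonneg_left (hp.inner_sub_le_proxPotential x w) hs
  have hy := mul_le_mul_of_nonneg_left (hp.inner_sub_le_proxPotential y w) ht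
  have hw : proxPotential φ p (s • x + t • y)
      = s * (⟪x, w⟫ - (1/2) * ‖w‖ ^ 2 - φ w) + t * (⟪y, w⟫ - (1/2) * ‖w‖ ^ 2 - φ w) := by
    rw [proxPotential, inner_add_left, real_inner_smul_left, real_inner_smul_left]
    linear_combination ((1/2) * ‖w‖ ^ 2 + φ w) * hst
  rw [smul_eq_mul, smul_eq_mul, hw]
  linarith

lemma proxPotential_sub_bounds (hp : IsProxMap φ p) (z y : E) :
    ⟪y - z, p z⟫ ≤ proxPotential φ p y - proxPotential φ p z ∧
      proxPotential φ p y - proxPotential φ p z ≤ ⟪y - z, p y⟫ := by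
  have hy := hp.inner_sub_le_proxPotential y (p z)
  have hz := hp.inner_sub_le_proxPotential z (p y)
  rw [inner_sub_left, inner_sub_left]
  unfold proxPotential at *
  constructor <;> linarith

lemma le_add_inner (hp : IsProxMap φ p) (hφ : ConvexOn ℝ univ φ) (z u : E) :
    φ (p z) ≤ φ u + ⟪p z - z, u - p z⟫ := by
  set a := p z
  suffices 0 ≤ φ u - φ a + ⟪a - z, u - a⟫ by linarith
  refine nonneg_of_forall_mem_Ioo_nonneg_add_mul (d := ‖u - a‖ ^ 2 / 2) fun t ht => ?_
  have hmin := hp z ((1 - t) • a + t • u)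
  have hconv := hφ.2 (mem_univ a) (mem_univ u) (by linarith [ht.2] : (0 : ℝ) ≤ 1 - t) ht.1.le
    (by ring)
  have hnorm : ‖(1 - t) • a + t • u - z‖ ^ 2
      = ‖a - z‖ ^ 2 + 2 * (t * ⟪a - z, u - a⟫) + t ^ 2 * ‖u - a‖ ^ 2 := by
    rw [show (1 - t) • a + t • u - z = (a - z) + t • (u - a) by module, norm_add_sq_real,
      real_inner_smul_right, norm_smul, mul_pow, Real.norm_eq_abs, sq_abs]
  rw [hnorm] at hmin
  rw [smul_eq_mul, smul_eq_mul] at hconv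
  refine (mul_nonneg_iff_of_pos_left ht.1).mp ?_
  nlinarith

lemma sq_norm_sub_le_inner (hp : IsProxMap φ p) (hφ : ConvexOn ℝ univ φ) (z z' : E) :
    ‖p z - p z'‖ ^ 2 ≤ ⟪z - z', p z - p z'⟫ := by
  have h := hp.le_add_inner hφ z (p z')
  have h' := hp.le_add_inner hφ z' (p z)
  have hsum : ⟪p z - z, p z' - p z⟫ + ⟪p z' - z', p z - p z'⟫
      = ⟪z - z', p z - p z'⟫ - ‖p z - p z'‖ ^ 2 := by
    rw [← real_inner_self_eq_norm_sq]
    simp only [inner_sub_left, inner_sub_right, real_inner_comm (p z) (p z'),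
      real_inner_comm (p z) z, real_inner_comm (p z') z']
    ring
  linarith

lemma lipschitzWith_one (hp : IsProxMap φ p) (hφ : ConvexOn ℝ univ φ) : LipschitzWith 1 p :=
  LipschitzWith.of_dist_le_mul fun z z' => by
    simpa [dist_eq_norm] using norm_le_of_sq_norm_le_inner (hp.sq_norm_sub_le_inner hφ z z')

end IsProxMap

/-- Let `φ : ℝⁿ → ℝ` be convex and let `p` map each `z` to a minimizer of
`u ↦ (1/2)‖u − z‖² + φ u`. Then `p` is nonexpansive, and there exists a convex function `ψ`
differentiable everywhere with `∇ψ(z) = p z` at every `z`. -/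
theorem stmt9 {n : ℕ} (φ : EuclideanSpace ℝ (Fin n) → ℝ)
    (hφ : ConvexOn ℝ Set.univ φ)
    (p : EuclideanSpace ℝ (Fin n) → EuclideanSpace ℝ (Fin n))
    (hp : ∀ z u : EuclideanSpace ℝ (Fin n),
      (1/2) * ‖p z - z‖^2 + φ (p z) ≤ (1/2) * ‖u - z‖^2 + φ u) :
    (∀ z z' : EuclideanSpace ℝ (Fin n), ‖p z - p z'‖ ≤ ‖z - z'‖) ∧
    (∃ ψ : EuclideanSpace ℝ (Fin n) → ℝ,
      ConvexOn ℝ Set.univ ψ ∧ ∀ z, HasGradientAt ψ (p z) z) := by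
  have hprox : IsProxMap φ p := hp
  have hlip := hprox.lipschitzWith_one hφ
  refine ⟨fun z z' => ?_, proxPotential φ p, hprox.convexOn_proxPotential, fun z => ?_⟩
  · simpa [dist_eq_norm] using hlip.dist_le_mul z z'
  · exact hasGradientAt_of_inner_le_sub_le_inner hlip.continuous.continuousAt
      (hprox.proxPotential_sub_bounds z)
end

section
/- Let E be the Euclidean space ℝⁿ, let ψ : E → ℝ be convex and differentiable everywhere, and let f : E → E be its gradient map (∇ψ(z) = f(z) for all z). Assume f is nonexpansive: ‖f(z) − f(z′)‖ ≤ ‖z − z′‖ for all z, z′. Define the convex conjugate ψ* : E → ℝ ∪ {+∞} (extended-real valued) by ψ*(u) = sup_{y ∈ E} (⟨u, y⟩ − ψ(y)). Then: (a) for every z ∈ E, ψ*(f(z)) = ⟨f(z), z⟩ − ψ(z) (in particular it is finite); (b) for every z, u ∈ E, ψ*(f(z)) + ⟨u, z⟩ ≤ ψ*(u) + ⟨f(z), z⟩ (as extended reals), i.e. f(z) minimizes u ↦ (1/2)‖u − z‖² + φ(u) where φ(u) = ψ*(u) − (1/2)‖u‖²; and (c) φ is convex: φ(t·x + (1−t)·y)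 ≤ t·φ(x) + (1−t)·φ(y) for all x, y ∈ E and t ∈ [0,1], with extended-real arithmetic. -/
/-!
Parts (a) and (b) come from the gradient inequality `ψ y ≥ ψ z + ⟪∇ψ z, y - z⟫`: the supremum
defining `ψ* (∇ψ z)` is attained at `y = z`.

For (c), note that `⟪x, w⟫ - ψ w - ½‖x‖² ≤ A_w x := ⟪w - ∇ψ w, x⟫ + ½‖∇ψ w‖² - ψ w`, the gap
being `½‖x - ∇ψ w‖²`. Conversely, since `∇ψ` is 1-Lipschitz, the descent lemma
`ψ (w + s) ≤ ψ w + ⟪∇ψ w, s⟫ + ½‖s‖²` at `s = x - ∇ψ w` gives `A_w x + ½‖x‖² ≤ ψ* x`.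
So `ψ* - ½‖·‖²` is the supremum of the affine functions `A_w`, hence convex.
-/

open Set
open scoped RealInnerProductSpace

variable {E : Type*} [NormedAddCommGroup E] [InnerProductSpace ℝ E]

theorem EReal.iSup_convexOn_le {F ι : Type*} [AddCommGroup F] [Module ℝ F] {g : ι → F → ℝ}
    (hg : ∀ i, ConvexOn ℝ univ (g i)) (x y : F) {t : ℝ} (ht₀ : 0 ≤ t) (ht₁ : t ≤ 1) :
    ⨆ i, (g i (t • x + (1 - t) • y) : EReal) ≤
      (t : EReal) * (⨆ i, (g i x : EReal)) + ((1 - t : ℝ) : EReal) * ⨆ i, (g i y : EReal) := by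
  refine iSup_le fun i => ?_
  have hi : g i (t • x + (1 - t) • y) ≤ t * g i x + (1 - t) * g i y :=
    (hg i).2 (mem_univ x) (mem_univ y) ht₀ (by linarith) (by ring)
  calc (g i (t • x + (1 - t) • y) : EReal)
      ≤ (t : EReal) * g i x + ((1 - t : ℝ) : EReal) * g i y := by exact_mod_cast hi
    _ ≤ _ := add_le_add
        (mul_le_mul_of_nonneg_left (le_iSup (fun i => (g i x : EReal)) i) (by exact_mod_cast ht₀))
        (mul_le_mul_of_nonneg_left (le_iSup (fun i => (g i y : EReal)) i)
          (by exact_mod_cast _root_.sub_nonneg.mpr ht₁))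

noncomputable def fenchelConjugate (ψ : E → ℝ) (u : E) : EReal :=
  ⨆ y, ((⟪u, y⟫ - ψ y : ℝ) : EReal)

theorem le_fenchelConjugate (ψ : E → ℝ) (u y : E) :
    ((⟪u, y⟫ - ψ y : ℝ) : EReal) ≤ fenchelConjugate ψ u :=
  le_iSup (fun y => ((⟪u, y⟫ - ψ y : ℝ) : EReal)) y

variable [CompleteSpace E]

theorem HasGradientAt.hasDerivAt_comp_add_smul {ψ : E → ℝ} {g w s : E} {t : ℝ}
    (h : HasGradientAt ψ g (w + t • s)) :
    HasDerivAt (fun t : ℝ => ψ (w + t • s)) ⟪g, s⟫ t := by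
  have hline : HasDerivAt (fun t : ℝ => w + t • s) s t := by
    simpa using ((hasDerivAt_id t).smul_const s).const_add w
  exact (hasGradientAt_iff_hasFDerivAt.mp h).comp_hasDerivAt t hline

theorem ConvexOn.add_inner_gradient_le {ψ : E → ℝ} {g z : E} (hψ : ConvexOn ℝ univ ψ)
    (hg : HasGradientAt ψ g z) (y : E) : ψ z + ⟪g, y - z⟫ ≤ ψ y := by
  have hline : ConvexOn ℝ univ fun t : ℝ => ψ (z + t • (y - z)) := by
    simpa [Function.comp_def, AffineMap.lineMap_apply, add_comm]
      using hψ.comp_affineMap (AffineMap.lineMap z y)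
  have hd : HasDerivAt (fun t : ℝ => ψ (z + t • (y - z))) ⟪g, y - z⟫ 0 :=
    HasGradientAt.hasDerivAt_comp_add_smul (by simpa using hg)
  have := hline.le_slope_of_hasDerivAt (mem_univ 0) (mem_univ 1) zero_lt_one hd
  simp only [slope, sub_zero, inv_one, one_smul, add_sub_cancel, zero_smul, add_zero, vsub_eq_sub,
    smul_eq_mul, one_mul] at this
  linarith

theorem apply_add_le_of_lipschitz_gradient {ψ : E → ℝ} {f : E → E} {L : ℝ}
    (hgrad : ∀ z, HasGradientAt ψ (f z) z) (hL : ∀ z z', ‖f z - f z'‖ ≤ L * ‖z - z'‖)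
    (w s : E) : ψ (w + s) ≤ ψ w + ⟪f w, s⟫ + L / 2 * ‖s‖ ^ 2 := by
  set g : ℝ → ℝ := fun t => ψ (w + t • s) - t * ⟪f w, s⟫ - L * t ^ 2 / 2 * ‖s‖ ^ 2
  have hd : ∀ t : ℝ, HasDerivAt g (⟪f (w + t • s) - f w, s⟫ - L * t * ‖s‖ ^ 2) t := by
    intro t
    have h := (((hgrad (w + t • s)).hasDerivAt_comp_add_smul).sub
      ((hasDerivAt_id t).mul_const ⟪f w, s⟫)).sub
      (((hasDerivAt_pow 2 t).const_mul L |>.div_const 2).mul_const (‖s‖ ^ 2))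
    exact h.congr_deriv (by rw [inner_sub_left]; push_cast; ring)
  have hderiv : ∀ t ∈ interior (Icc (0 : ℝ) 1), deriv g t ≤ 0 := by
    intro t ht
    rw [interior_Icc] at ht
    rw [(hd t).deriv, sub_nonpos]
    calc ⟪f (w + t • s) - f w, s⟫ ≤ ‖f (w + t • s) - f w‖ * ‖s‖ := real_inner_le_norm _ _
      _ ≤ L * ‖(w + t • s) - w‖ * ‖s‖ := by gcongr; exact hL _ _
      _ = L * t * ‖s‖ ^ 2 := by
        rw [add_sub_cancel_left, norm_smul, Real.norm_of_nonneg ht.1.le]; ring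
  have hanti : AntitoneOn g (Icc 0 1) :=
    antitoneOn_of_deriv_nonpos (convex_Icc 0 1) (fun t _ => (hd t).continuousAt.continuousWithinAt)
      (fun t _ => (hd t).differentiableAt.differentiableWithinAt) hderiv
  have := hanti (left_mem_Icc.mpr zero_le_one) (right_mem_Icc.mpr zero_le_one) zero_le_one
  simp only [g, one_smul, one_mul, one_pow, mul_one, zero_smul, add_zero, zero_mul, sub_zero,
    ne_eq, OfNat.ofNat_ne_zero, not_false_eq_true, zero_pow, mul_zero, zero_div] at this
  linarith

theorem ConvexOn.fenchelConjugate_gradient {ψ : E → ℝ} {g z : E} (hψ : ConvexOn ℝ univ ψ)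
    (hg : HasGradientAt ψ g z) : fenchelConjugate ψ g = ((⟪g, z⟫ - ψ z : ℝ) : EReal) := by
  refine le_antisymm (iSup_le fun y => EReal.coe_le_coe_iff.2 ?_) (le_fenchelConjugate ψ g z)
  have := hψ.add_inner_gradient_le hg y
  rw [inner_sub_right] at this
  linarith

theorem ConvexOn.fenchelConjugate_gradient_add_inner_le {ψ : E → ℝ} {g z : E}
    (hψ : ConvexOn ℝ univ ψ) (hg : HasGradientAt ψ g z) (u : E) :
    fenchelConjugate ψ g + (⟪u, z⟫ : EReal) ≤ fenchelConjugate ψ u + (⟪g, z⟫ : EReal) := by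
  rw [hψ.fenchelConjugate_gradient hg]
  calc ((⟪g, z⟫ - ψ z : ℝ) : EReal) + (⟪u, z⟫ : EReal)
      = ((⟪u, z⟫ - ψ z : ℝ) : EReal) + (⟪g, z⟫ : EReal) := by norm_cast; ring
    _ ≤ fenchelConjugate ψ u + (⟪g, z⟫ : EReal) := add_le_add_left (le_fenchelConjugate ψ u z) _

theorem fenchelConjugate_sub_half_sq_eq_iSup {ψ : E → ℝ} {f : E → E}
    (hgrad : ∀ z, HasGradientAt ψ (f z) z) (hf : ∀ z z', ‖f z - f z'‖ ≤ ‖z - z'‖) (x : E) :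
    fenchelConjugate ψ x - ((1 / 2 * ‖x‖ ^ 2 : ℝ) : EReal) =
      ⨆ w, ((⟪w - f w, x⟫ + (1 / 2 * ‖f w‖ ^ 2 - ψ w) : ℝ) : EReal) := by
  have hA : ∀ w, ⟪w - f w, x⟫ + (1 / 2 * ‖f w‖ ^ 2 - ψ w) + 1 / 2 * ‖x‖ ^ 2 =
      ⟪x, w⟫ - ψ w + 1 / 2 * ‖x - f w‖ ^ 2 := fun w => by
    rw [inner_sub_left, real_inner_comm x w, real_inner_comm x (f w), norm_sub_sq_real]; ring
  refine le_antisymm (EReal.sub_le_of_le_add (iSup_le fun w => ?_)) (iSup_le fun w => ?_)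
  · calc ((⟪x, w⟫ - ψ w : ℝ) : EReal)
        ≤ ((⟪w - f w, x⟫ + (1 / 2 * ‖f w‖ ^ 2 - ψ w) + 1 / 2 * ‖x‖ ^ 2 : ℝ) : EReal) := by
          rw [EReal.coe_le_coe_iff, hA]
          linarith [sq_nonneg ‖x - f w‖]
      _ ≤ _ := by
          rw [EReal.coe_add]
          exact add_le_add_left
            (le_iSup (fun w => ((⟪w - f w, x⟫ + (1 / 2 * ‖f w‖ ^ 2 - ψ w) : ℝ) : EReal)) w) _
  · rw [EReal.le_sub_iff_add_le (.inl (EReal.coe_ne_bot _)) (.inl (EReal.coe_ne_top _)),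
      ← EReal.coe_add, hA]
    refine le_trans (EReal.coe_le_coe_iff.2 ?_) (le_fenchelConjugate ψ x (w + (x - f w)))
    have hdesc := apply_add_le_of_lipschitz_gradient (L := 1) hgrad (by simpa using hf) w (x - f w)
    rw [inner_add_right, inner_sub_right, real_inner_self_eq_norm_sq]
    rw [inner_sub_right, real_inner_comm x (f w), real_inner_self_eq_norm_sq] at hdesc
    linarith [norm_sub_sq_real x (f w)]

/-- Let `ψ : ℝⁿ → ℝ` be convex and differentiable everywhere with gradient map
`f`, and assume `f` is nonexpansive. Define the convex conjugate
`ψ* u = ⨆ y, (⟨u, y⟩ − ψ y)` (extended-real valued). Then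
(a) `ψ*(f z) = ⟨f z, z⟩ − ψ z` for every `z`;
(b) `ψ*(f z) + ⟨u, z⟩ ≤ ψ* u + ⟨f z, z⟩` for every `z, u`;
(c) `φ u = ψ* u − (1/2)‖u‖²` is convex (with extended-real arithmetic). -/
theorem stmt10 {n : ℕ} (ψ : EuclideanSpace ℝ (Fin n) → ℝ)
    (hψconv : ConvexOn ℝ Set.univ ψ)
    (f : EuclideanSpace ℝ (Fin n) → EuclideanSpace ℝ (Fin n))
    (hgrad : ∀ z, HasGradientAt ψ (f z) z)
    (hne : ∀ z z' : EuclideanSpace ℝ (Fin n), ‖f z - f z'‖ ≤ ‖z - z'‖)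
    (ψstar : EuclideanSpace ℝ (Fin n) → EReal)
    (hψstar : ∀ u, ψstar u = ⨆ y : EuclideanSpace ℝ (Fin n),
      (((inner ℝ u y : ℝ) - ψ y : ℝ) : EReal))
    (φ : EuclideanSpace ℝ (Fin n) → EReal)
    (hφ : ∀ u, φ u = ψstar u - (((1/2) * ‖u‖^2 : ℝ) : EReal)) :
    (∀ z, ψstar (f z) = (((inner ℝ (f z) z : ℝ) - ψ z : ℝ) : EReal)) ∧
    (∀ z u, ψstar (f z) + ((inner ℝ u z : ℝ) : EReal) ≤
      ψstar u + ((inner ℝ (f z) z : ℝ) : EReal)) ∧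
    (∀ x y : EuclideanSpace ℝ (Fin n), ∀ t : ℝ, 0 ≤ t → t ≤ 1 →
      φ (t • x + (1 - t) • y) ≤ (t : EReal) * φ x + ((1 - t : ℝ) : EReal) * φ y) := by
  obtain rfl : ψstar = fenchelConjugate ψ := funext hψstar
  refine ⟨fun z => hψconv.fenchelConjugate_gradient (hgrad z),
    fun z => hψconv.fenchelConjugate_gradient_add_inner_le (hgrad z), fun x y t ht₀ ht₁ => ?_⟩
  simp only [hφ, fenchelConjugate_sub_half_sq_eq_iSup hgrad hne]
  exact EReal.iSup_convexOn_le
    (fun w => ((innerₛₗ ℝ (w - f w)).convexOn convex_univ).add_const _) x y ht₀ ht₁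
end

section
/- Let E be the Euclidean space ℝⁿ, let φ : E → ℝ be convex, and let λ > 0, μ > 0. Define the Moreau envelope M : E → ℝ by M(u) = inf_{w ∈ E} ( (1/(2μ))‖w − u‖² + φ(w) ). Fix z ∈ E, and suppose p ∈ E is a minimizer of u ↦ (1/(2(μ+λ)))‖u − z‖² + φ(u). Then the point q = z + (λ/(μ+λ))·(p − z) is a minimizer of u ↦ (1/(2λ))‖u − z‖² + M(u); that is, Prox^λ_{M^μ_φ}(z) = z + (λ/(μ+λ))·(Prox^{μ+λ}_φ(z) − z). -/
/-!
For positive weights, `‖a + b‖² / (λ + μ) ≤ ‖a‖² / λ + ‖b‖² / μ`. With `a = u - z`, `b = w - u` this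
says that the `(μ + λ)`-proximal objective of `φ` at `w` is at most the `λ`-objective at `u` plus the
`μ`-envelope objective at `w`, so the minimal value of the former bounds
`u ↦ ‖u - z‖² / (2λ) + M u` from below. At `u = q`, `w = p` the vectors `a` and `b` are positively
proportional with the ratio `λ : μ`, so the inequality is an equality and `q` attains this bound.
-/

theorem add_sq_div_add_le {x y s t : ℝ} (hs : 0 < s) (ht : 0 < t) :
    (x + y) ^ 2 / (s + t) ≤ x ^ 2 / s + y ^ 2 / t := by
  rw [div_add_div _ _ hs.ne' ht.ne', div_le_div_iff₀ (by positivity) (by positivity)]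
  nlinarith [sq_nonneg (t * x - s * y), mul_pos hs ht]

theorem norm_add_sq_div_add_le {E : Type*} [SeminormedAddGroup E] (a b : E) {s t : ℝ}
    (hs : 0 < s) (ht : 0 < t) :
    ‖a + b‖ ^ 2 / (s + t) ≤ ‖a‖ ^ 2 / s + ‖b‖ ^ 2 / t :=
  calc ‖a + b‖ ^ 2 / (s + t) ≤ (‖a‖ + ‖b‖) ^ 2 / (s + t) := by
        gcongr; exact norm_add_le a b
    _ ≤ ‖a‖ ^ 2 / s + ‖b‖ ^ 2 / t := add_sq_div_add_le hs ht

section MoreauEnvelope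

variable {E : Type*} [SeminormedAddCommGroup E]

theorem prox_min_sub_le_envelope_objective {φ : E → ℝ} {lam μ : ℝ} (hlam : 0 < lam) (hμ : 0 < μ)
    {z p : E}
    (hp : ∀ u, (1/(2*(μ+lam))) * ‖p - z‖^2 + φ p ≤ (1/(2*(μ+lam))) * ‖u - z‖^2 + φ u)
    (u w : E) :
    (1/(2*(μ+lam))) * ‖p - z‖^2 + φ p - (1/(2*lam)) * ‖u - z‖^2 ≤
      (1/(2*μ)) * ‖w - u‖^2 + φ w := by
  have h := norm_add_sq_div_add_le (u - z) (w - u) hlam hμ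
  rw [sub_add_sub_cancel', add_comm lam] at h
  have hpw := hp w
  have e : ∀ (s x : ℝ), 1 / (2 * s) * x = x / s / 2 := fun s x => by ring
  simp only [e] at *
  linarith

theorem norm_sq_div_add_norm_sq_div_of_eq_add_smul [NormedSpace ℝ E] {lam μ : ℝ}
    (hlam : 0 < lam) (hμ : 0 < μ) {z p q : E} (hq : q = z + (lam/(μ+lam)) • (p - z)) :
    (1/(2*lam)) * ‖q - z‖^2 + (1/(2*μ)) * ‖p - q‖^2 = (1/(2*(μ+lam))) * ‖p - z‖^2 := by
  have hqz : q - z = (lam/(μ+lam)) • (p - z) := by rw [hq, add_sub_cancel_left]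
  have hpq : p - q = (μ/(μ+lam)) • (p - z) := by
    have hμ' : μ/(μ+lam) = 1 - lam/(μ+lam) := by field_simp; ring
    rw [hμ', sub_smul, one_smul, hq]
    abel
  rw [hqz, hpq, norm_smul, norm_smul, mul_pow, mul_pow, Real.norm_eq_abs, Real.norm_eq_abs,
    sq_abs, sq_abs]
  field_simp
  ring

end MoreauEnvelope

theorem stmt12_general {n : ℕ} (φ : EuclideanSpace ℝ (Fin n) → ℝ)
    (lam μ : ℝ) (hlam : 0 < lam) (hμ : 0 < μ)
    (M : EuclideanSpace ℝ (Fin n) → ℝ)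
    (hM : ∀ u, M u = ⨅ w : EuclideanSpace ℝ (Fin n), ((1/(2*μ)) * ‖w - u‖^2 + φ w))
    (z p : EuclideanSpace ℝ (Fin n))
    (hp : ∀ u, (1/(2*(μ+lam))) * ‖p - z‖^2 + φ p ≤ (1/(2*(μ+lam))) * ‖u - z‖^2 + φ u)
    (q : EuclideanSpace ℝ (Fin n)) (hq : q = z + (lam/(μ+lam)) • (p - z)) :
    ∀ u, (1/(2*lam)) * ‖q - z‖^2 + M q ≤ (1/(2*lam)) * ‖u - z‖^2 + M u := by
  intro u
  have hlow := prox_min_sub_le_envelope_objective hlam hμ hp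
  have hMu := le_ciInf (hlow u)
  have hMq : M q ≤ (1/(2*μ)) * ‖p - q‖^2 + φ p := by
    rw [hM q]; exact ciInf_le ⟨_, Set.forall_mem_range.2 (hlow q)⟩ p
  rw [← hM u] at hMu
  linarith [norm_sq_div_add_norm_sq_div_of_eq_add_smul hlam hμ hq]

/-- Let `φ : ℝⁿ → ℝ` be convex, `λ, μ > 0`, and
`M u = ⨅ w, ((1/(2μ))‖w − u‖² + φ w)` the Moreau envelope. Fix `z` and suppose `p` minimizes
`u ↦ (1/(2(μ+λ)))‖u − z‖² + φ u`. Then `q = z + (λ/(μ+λ)) • (p − z)` minimizes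
`u ↦ (1/(2λ))‖u − z‖² + M u`. -/
theorem stmt12 {n : ℕ} (φ : EuclideanSpace ℝ (Fin n) → ℝ)
    (hφ : ConvexOn ℝ Set.univ φ) (lam μ : ℝ) (hlam : 0 < lam) (hμ : 0 < μ)
    (M : EuclideanSpace ℝ (Fin n) → ℝ)
    (hM : ∀ u, M u = ⨅ w : EuclideanSpace ℝ (Fin n), ((1/(2*μ)) * ‖w - u‖^2 + φ w))
    (z p : EuclideanSpace ℝ (Fin n))
    (hp : ∀ u, (1/(2*(μ+lam))) * ‖p - z‖^2 + φ p ≤ (1/(2*(μ+lam))) * ‖u - z‖^2 + φ u)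
    (q : EuclideanSpace ℝ (Fin n)) (hq : q = z + (lam/(μ+lam)) • (p - z)) :
    ∀ u, (1/(2*lam)) * ‖q - z‖^2 + M q ≤ (1/(2*lam)) * ‖u - z‖^2 + M u :=
  stmt12_general φ lam μ hlam hμ M hM z p hp q hq
end

section
/- Let G be a real m×n matrix, K a real h×h matrix, σ : ℝ → ℝ a function applied entrywise to matrices, B a real n×h matrix, and d : {1,…,n} → ℝ with d(i) > 0 for all i. Let D̃ = diag(d), let Ĝ = G·diag(d(i)^{−1/2})/√2, and let S = diag(√(2·d(i))), so S = (2D̃)^{1/2}. Then a real n×h matrix Z satisfies the row-normalized equation Z = −(2D̃)⁻¹ Gᵀ σ(G (Z + B) Kᵀ) K if and only if Z̄ := S·Z satisfies the symmetric-normalized equation Z̄ = −Ĝᵀ σ(Ĝ (Z̄ + B̄) Kᵀ) K, where B̄ = S·B. -/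
open Matrix

/-!
With `S = diag s` invertible, multiplying the row-normalized equation by `S` is reversible.
Writing `Ĝ = G S⁻¹`, the identity `Ĝ S = G` absorbs the `S` inside `σ`, and
`S · diag (s⁻²) · Gᵀ = Ĝᵀ` turns the outer factor into `Ĝᵀ`. Here `s i = √(2 d i)`, so that
`(2 d i)⁻¹ = s i⁻²`.
-/

namespace Matrix

variable {𝕜 : Type*} [Field 𝕜] {l m n p : Type*} [Fintype n] [DecidableEq n]
  [Fintype l] [Fintype p] {s : n → 𝕜}

lemma diagonal_inv_mul_diagonal (hs : ∀ i, s i ≠ 0) : diagonal s⁻¹ * diagonal s = 1 := by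
  rw [diagonal_mul_diagonal, ← diagonal_one]
  exact congrArg diagonal (funext fun i => inv_mul_cancel₀ (hs i))

lemma mul_diagonal_inv_mul_diagonal (hs : ∀ i, s i ≠ 0) (G : Matrix m n 𝕜) :
    G * diagonal s⁻¹ * diagonal s = G := by
  rw [Matrix.mul_assoc, diagonal_inv_mul_diagonal hs, Matrix.mul_one]

lemma diagonal_mul_diagonal_inv_sq_mul_transpose (hs : ∀ i, s i ≠ 0) (G : Matrix m n 𝕜) :
    diagonal s * diagonal (fun i => (s i ^ 2)⁻¹) * Gᵀ = (G * diagonal s⁻¹)ᵀ := by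
  rw [transpose_mul, diagonal_transpose, diagonal_mul_diagonal]
  congr 2
  funext i
  rw [Pi.inv_apply, sq, mul_inv, ← mul_assoc, mul_inv_cancel₀ (hs i), one_mul]

theorem fixedPoint_iff_diagonal_mul_fixedPoint [Fintype m] (hs : ∀ i, s i ≠ 0)
    (G : Matrix m n 𝕜) (K : Matrix p l 𝕜) (σ : 𝕜 → 𝕜) (B Z : Matrix n l 𝕜) :
    Z = -(diagonal (fun i => (s i ^ 2)⁻¹) * Gᵀ * (G * (Z + B) * Kᵀ).map σ * K) ↔
      diagonal s * Z = -((G * diagonal s⁻¹)ᵀ *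
        (G * diagonal s⁻¹ * (diagonal s * Z + diagonal s * B) * Kᵀ).map σ * K) := by
  rw [← (mul_right_injective_of_inv _ _ (diagonal_inv_mul_diagonal hs)).eq_iff,
    ← Matrix.mul_add, ← Matrix.mul_assoc, mul_diagonal_inv_mul_diagonal hs, Matrix.mul_neg,
    ← Matrix.mul_assoc, ← Matrix.mul_assoc, ← Matrix.mul_assoc,
    diagonal_mul_diagonal_inv_sq_mul_transpose hs]

end Matrix

/-- With `d i > 0`, `D̃ = diag d`, `Ĝ = G · diag (d i)^{−1/2} / √2`, and
`S = (2 D̃)^{1/2} = diag √(2 d i)`, a matrix `Z` satisfies the row-normalized equation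
`Z = −(2D̃)⁻¹ Gᵀ σ(G (Z + B) Kᵀ) K` iff `Z̄ = S Z` satisfies the symmetric-normalized equation
`Z̄ = −Ĝᵀ σ(Ĝ (Z̄ + B̄) Kᵀ) K` with `B̄ = S B`. -/
theorem stmt14 {m n h : ℕ} (G : Matrix (Fin m) (Fin n) ℝ) (K : Matrix (Fin h) (Fin h) ℝ)
    (σ : ℝ → ℝ) (B Z : Matrix (Fin n) (Fin h) ℝ)
    (d : Fin n → ℝ) (hd : ∀ i, 0 < d i)
    (Ghat : Matrix (Fin m) (Fin n) ℝ)
    (hGhat : Ghat = (Real.sqrt 2)⁻¹ • (G * Matrix.diagonal fun i => (Real.sqrt (d i))⁻¹))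
    (S : Matrix (Fin n) (Fin n) ℝ)
    (hS : S = Matrix.diagonal fun i => Real.sqrt (2 * d i)) :
    (Z = -((Matrix.diagonal fun i => (2 * d i)⁻¹) * Gᵀ * ((G * (Z + B) * Kᵀ).map σ) * K))
    ↔
    (S * Z = -(Ghatᵀ * ((Ghat * (S * Z + S * B) * Kᵀ).map σ) * K)) := by
  have hs : ∀ i, Real.sqrt (2 * d i) ≠ 0 := fun i => (Real.sqrt_pos.2 (by linarith [hd i])).ne'
  have hGhat' : Ghat = G * diagonal (fun i => Real.sqrt (2 * d i))⁻¹ := by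
    rw [hGhat, ← Matrix.mul_smul, ← diagonal_smul]
    congr 2
    funext i
    rw [Pi.inv_apply, Real.sqrt_mul zero_le_two, mul_inv, Pi.smul_apply, smul_eq_mul]
  have hsq : (fun i => (2 * d i)⁻¹) = fun i => (Real.sqrt (2 * d i) ^ 2)⁻¹ := by
    funext i
    rw [Real.sq_sqrt (by linarith [hd i])]
  rw [hGhat', hS, hsq]
  exact fixedPoint_iff_diagonal_mul_fixedPoint hs G K σ B Z
end
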